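/- Let (U, H) be an APK-compatible pair. The Lie algebra g_U is 2-step nilpotent (i.e. [z,[x,y]] = 0 for all x,y,z) if and only if U³ = {0} and ann(U)^⊥ ⊆ ann(U). In that case, the pseudo-Kähler metric is flat if and only if U² ⊆ (U²)^⊥. -/

import Mathlib

/-!
If `g_U` is 2-step nilpotent, pairing `[z,[x,y]] = 0` with `s` and using the APK identity gives
`H(R*_x z, R*_y s) - H(R*_y z, R*_x s) = H(x, y(zs)) - H(y, x(zs))`. Regrouped, this equates a
function that is complex linear in `y` with one that is antilinear in `y`, so both vanish; the
same trick in `z` kills every term. Hence `U³ = 0`, and every `R*_x z` lies in `ann(U)`, which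
gives `ann(U)^⊥ ⊆ ann(U)`. Conversely, these two conditions put every bracket in `ann(U)`,
which `R*_z` kills. Once the terms `H(R*_x z, R*_y s)` are gone, flatness says exactly that
`H(yz, xs)` is symmetric in `x, y`, and linear-versus-antilinear in `x` again gives `U² ⊥ U²`.
-/

/-- The bracket `[x,y] = R_y* x - R_x* y` of the Lie algebra `g_U`. -/
def brkt {U : Type*} [Sub U] (Rstar : U → U → U) (x y : U) : U :=
  Rstar y x - Rstar x y

open Complex ComplexConjugate

theorem eq_zero_of_eq_of_linear_of_antilinear {M : Type*} [SMul ℂ M] {f g : M → ℂ}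
    (hf : ∀ m, f (I • m) = I * f m) (hg : ∀ m, g (I • m) = -(I * g m))
    (hfg : ∀ m, f m = g m) (m : M) : f m = 0 := by
  have h : I * f m = -(I * f m) :=
    calc I * f m = g (I • m) := by rw [← hf, hfg]
      _ = -(I * f m) := by rw [hg, hfg]
  linear_combination (-I / 2) * h + f m * I_mul_I

section HermitianForm

variable {V : Type*} [AddCommGroup V] [Module ℂ V]

structure IsHermitianForm (H : V → V → ℂ) : Prop where
  add_left : ∀ x x' y, H (x + x') y = H x y + H x' y
  smul_left : ∀ (c : ℂ) x y, H (c • x) y = c * H x y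
  conj_symm : ∀ x y, H x y = conj (H y x)

namespace IsHermitianForm

variable {H : V → V → ℂ}

theorem sub_left (hH : IsHermitianForm H) (x x' y : V) : H (x - x') y = H x y - H x' y := by
  rw [sub_eq_add_neg, hH.add_left, ← neg_one_smul ℂ x', hH.smul_left]
  ring

theorem sub_right (hH : IsHermitianForm H) (x y y' : V) : H x (y - y') = H x y - H x y' := by
  rw [hH.conj_symm, hH.sub_left, map_sub, ← hH.conj_symm, ← hH.conj_symm]

theorem zero_right (hH : IsHermitianForm H) (x : V) : H x 0 = 0 := by
  simpa using hH.sub_right x 0 0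

theorem smul_right (hH : IsHermitianForm H) (c : ℂ) (x y : V) :
    H x (c • y) = conj c * H x y := by
  rw [hH.conj_symm, hH.smul_left, map_mul, ← hH.conj_symm]

theorem ext (hH : IsHermitianForm H) (hnd : ∀ x, (∀ y, H x y = 0) → x = 0) {a b : V}
    (h : ∀ s, H a s = H b s) : a = b :=
  sub_eq_zero.mp <| hnd _ fun s => by rw [hH.sub_left, h, sub_self]

theorem eq_zero_of_forall_left (hH : IsHermitianForm H) (hnd : ∀ x, (∀ y, H x y = 0) → x = 0)
    {v : V} (h : ∀ x, H x v = 0) : v = 0 :=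
  hnd v fun y => by rw [hH.conj_symm, h, map_zero]

end IsHermitianForm

end HermitianForm

section APK

variable {U : Type*} [NonUnitalCommRing U] [Module ℂ U]
variable {H : U → U → ℂ} {Rstar : U → U → U}

structure IsAPKPair (H : U → U → ℂ) (Rstar : U → U → U) : Prop where
  hermitian : IsHermitianForm H
  nondegenerate : ∀ x, (∀ y, H x y = 0) → x = 0
  adjoint : ∀ z x y, H (Rstar z x) y = H x (z * y)
  apk : ∀ x y z, x * Rstar z y = y * Rstar z x

theorem hermitian_mul_left (hH : IsHermitianForm H)
    (hadj : ∀ z x y, H (Rstar z x) y = H x (z * y)) (z x y : U) :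
    H (z * x) y = H x (Rstar z y) := by
  rw [hH.conj_symm, ← hadj, ← hH.conj_symm]

theorem Rstar_smul_left [IsScalarTower ℂ U U] (hH : IsHermitianForm H)
    (hnd : ∀ x, (∀ y, H x y = 0) → x = 0) (hadj : ∀ z x y, H (Rstar z x) y = H x (z * y))
    (c : ℂ) (z x : U) : Rstar (c • z) x = conj c • Rstar z x :=
  hH.ext hnd fun s => by rw [hadj, smul_mul_assoc, hH.smul_right, hH.smul_left, hadj]

theorem Rstar_smul_right (hH : IsHermitianForm H) (hnd : ∀ x, (∀ y, H x y = 0) → x = 0)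
    (hadj : ∀ z x y, H (Rstar z x) y = H x (z * y)) (c : ℂ) (z x : U) :
    Rstar z (c • x) = c • Rstar z x :=
  hH.ext hnd fun s => by rw [hadj, hH.smul_left, hH.smul_left, hadj]

theorem hermitian_Rstar_brkt_left (hH : IsHermitianForm H)
    (hadj : ∀ z x y, H (Rstar z x) y = H x (z * y))
    (hapk : ∀ x y z, x * Rstar z y = y * Rstar z x) (x y z s : U) :
    H (Rstar (brkt Rstar x y) z) s = H (Rstar x z) (Rstar y s) - H (Rstar y z) (Rstar x s) := by
  rw [hadj, brkt, sub_mul, hH.sub_right, mul_comm (Rstar y x), hapk s x y, mul_comm (Rstar x y),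
    hapk s y x, hadj, hadj]

theorem hermitian_Rstar_brkt_right (hH : IsHermitianForm H)
    (hadj : ∀ z x y, H (Rstar z x) y = H x (z * y)) (x y z s : U) :
    H (Rstar z (brkt Rstar x y)) s = H x (y * (z * s)) - H y (x * (z * s)) := by
  rw [hadj, brkt, hH.sub_left, hadj, hadj]

def IsTwoStepNilpotent (Rstar : U → U → U) : Prop :=
  ∀ x y z : U, brkt Rstar z (brkt Rstar x y) = 0

/-- The flatness identity `3 R_x R_y* - 3 R_y R_x* + R_x* R_y - R_y* R_x = 0`, applied to `z`. -/
def IsFlat (Rstar : U → U → U) : Prop :=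
  ∀ x y z : U, (3 : ℂ) • (x * Rstar y z) - (3 : ℂ) • (y * Rstar x z) +
    Rstar x (y * z) - Rstar y (x * z) = 0

theorem isTwoStepNilpotent_of_mul_mul_eq_zero (hH : IsHermitianForm H)
    (hnd : ∀ x, (∀ y, H x y = 0) → x = 0) (hadj : ∀ z x y, H (Rstar z x) y = H x (z * y))
    (hcube : ∀ x y z : U, x * y * z = 0)
    (hann : ∀ w : U, (∀ a : U, (∀ v : U, a * v = 0) → H w a = 0) → ∀ v : U, w * v = 0) :
    IsTwoStepNilpotent Rstar := by
  intro x y z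
  have horth : ∀ a : U, (∀ v, a * v = 0) → H (brkt Rstar x y) a = 0 := fun a ha => by
    rw [brkt, hH.sub_left, hadj, hadj, mul_comm y, mul_comm x, ha, ha, hH.zero_right,
      hH.zero_right, sub_self]
  have hleft : Rstar (brkt Rstar x y) z = 0 :=
    hnd _ fun s => by rw [hadj, hann _ horth, hH.zero_right]
  have hright : Rstar z (brkt Rstar x y) = 0 :=
    hnd _ fun s => by rw [hadj]; exact horth _ fun v => hcube z s v
  rw [brkt, hleft, hright, sub_self]

namespace IsTwoStepNilpotent

variable [IsScalarTower ℂ U U]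

theorem hermitian_Rstar_Rstar_add (hN : IsTwoStepNilpotent Rstar) (hP : IsAPKPair H Rstar)
    (x y z s : U) : H (Rstar x z) (Rstar y s) + H y (x * (z * s)) = 0 := by
  obtain ⟨hH, hnd, hadj, hapk⟩ := hP
  have hsym : ∀ y, H (Rstar x z) (Rstar y s) - H (Rstar y z) (Rstar x s) =
      H x (y * (z * s)) - H y (x * (z * s)) := fun y => by
    rw [← hermitian_Rstar_brkt_left hH hadj hapk, ← hermitian_Rstar_brkt_right hH hadj,
      sub_eq_zero.mp (hN x y z)]
  refine eq_zero_of_eq_of_linear_of_antilinear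
    (f := fun y => H (Rstar x z) (Rstar y s) + H y (x * (z * s)))
    (g := fun y => H (Rstar y z) (Rstar x s) + H x (y * (z * s))) (fun y => ?_) (fun y => ?_)
    (fun y => by linear_combination hsym y) y
  · rw [Rstar_smul_left hH hnd hadj, hH.smul_right, conj_conj, hH.smul_left]
    ring
  · rw [Rstar_smul_left hH hnd hadj, hH.smul_left, smul_mul_assoc, hH.smul_right, conj_I]
    ring

variable [SMulCommClass ℂ U U]

theorem hermitian_Rstar_Rstar (hN : IsTwoStepNilpotent Rstar) (hP : IsAPKPair H Rstar)
    (x y z s : U) : H (Rstar x z) (Rstar y s) = 0 := by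
  refine eq_zero_of_eq_of_linear_of_antilinear (f := fun z => H (Rstar x z) (Rstar y s))
    (g := fun z => -H y (x * (z * s))) (fun z => ?_) (fun z => ?_)
    (fun z => eq_neg_of_add_eq_zero_left (hN.hermitian_Rstar_Rstar_add hP x y z s)) z
  · rw [Rstar_smul_right hP.hermitian hP.nondegenerate hP.adjoint, hP.hermitian.smul_left]
  · rw [smul_mul_assoc, mul_smul_comm, hP.hermitian.smul_right, conj_I]
    ring

theorem mul_mul_eq_zero (hN : IsTwoStepNilpotent Rstar) (hP : IsAPKPair H Rstar) (x y z : U) :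
    x * y * z = 0 := by
  refine hP.hermitian.eq_zero_of_forall_left hP.nondegenerate fun t => ?_
  have h := hN.hermitian_Rstar_Rstar_add hP x t y z
  rwa [hN.hermitian_Rstar_Rstar hP, zero_add, ← mul_assoc] at h

theorem Rstar_mul_eq_zero (hN : IsTwoStepNilpotent Rstar) (hP : IsAPKPair H Rstar)
    (x z u : U) : Rstar x z * u = 0 :=
  hP.nondegenerate _ fun t => by
    rw [mul_comm, hermitian_mul_left hP.hermitian hP.adjoint, hN.hermitian_Rstar_Rstar hP]

theorem mul_eq_zero_of_forall_ann (hN : IsTwoStepNilpotent Rstar) (hP : IsAPKPair H Rstar)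
    {w : U} (hw : ∀ a : U, (∀ v : U, a * v = 0) → H w a = 0) (v : U) : w * v = 0 :=
  hP.nondegenerate _ fun s => by
    rw [mul_comm, hermitian_mul_left hP.hermitian hP.adjoint]
    exact hw _ (hN.Rstar_mul_eq_zero hP v s)

theorem isFlat_iff (hN : IsTwoStepNilpotent Rstar) (hP : IsAPKPair H Rstar) :
    IsFlat Rstar ↔ ∀ x y z s : U, H (y * z) (x * s) = H (x * z) (y * s) := by
  have hH := hP.hermitian
  have hexpand : ∀ x y z s : U, H ((3 : ℂ) • (x * Rstar y z) - (3 : ℂ) • (y * Rstar x z) +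
      Rstar x (y * z) - Rstar y (x * z)) s = H (y * z) (x * s) - H (x * z) (y * s) := by
    intro x y z s
    rw [hH.sub_left, hH.add_left, hH.sub_left, hH.smul_left, hH.smul_left,
      hermitian_mul_left hH hP.adjoint x, hermitian_mul_left hH hP.adjoint y,
      hN.hermitian_Rstar_Rstar hP, hN.hermitian_Rstar_Rstar hP, hP.adjoint x, hP.adjoint y]
    ring
  refine ⟨fun hF x y z s => sub_eq_zero.mp ?_, fun hsym x y z => hP.nondegenerate _ fun s => ?_⟩
  · rw [← hexpand, hF, ← zero_smul ℂ (0 : U), hH.smul_left, zero_mul]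
  · rw [hexpand, hsym, sub_self]

end IsTwoStepNilpotent

theorem hermitian_mul_mul_symm_iff [IsScalarTower ℂ U U] (hH : IsHermitianForm H) :
    (∀ x y z s : U, H (y * z) (x * s) = H (x * z) (y * s)) ↔
      ∀ x y z t : U, H (x * y) (z * t) = 0 := by
  refine ⟨fun hsym x y z t => ?_, fun h x y z s => by rw [h, h]⟩
  refine eq_zero_of_eq_of_linear_of_antilinear (f := fun x => H (x * y) (z * t))
    (g := fun x => H (z * y) (x * t))
    (fun x => ?_) (fun x => ?_) (fun x => (hsym x z y t).symm) x
  · rw [smul_mul_assoc, hH.smul_left]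
  · rw [smul_mul_assoc, hH.smul_right, conj_I]
    ring

end APK

theorem apk_two_step_nilpotent_iff_general
    {U : Type*} [NonUnitalCommRing U] [Module ℂ U]
    [SMulCommClass ℂ U U] [IsScalarTower ℂ U U]
    (H : U → U → ℂ)
    (Hadd : ∀ x x' y : U, H (x + x') y = H x y + H x' y)
    (Hsmul : ∀ (c : ℂ) (x y : U), H (c • x) y = c * H x y)
    (Hherm : ∀ x y : U, H x y = starRingEnd ℂ (H y x))
    (Hnd : ∀ x : U, (∀ y : U, H x y = 0) → x = 0)
    (Rstar : U → U → U)
    (hadj : ∀ z x y : U, H (Rstar z x) y = H x (z * y))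
    (hapk : ∀ x y z : U, x * Rstar z y = y * Rstar z x) :
    ((∀ x y z : U, brkt Rstar z (brkt Rstar x y) = 0) ↔
      ((∀ x y z : U, x * y * z = 0) ∧
        (∀ w : U, (∀ a : U, (∀ v : U, a * v = 0) → H w a = 0) →
          ∀ v : U, w * v = 0))) ∧
    ((∀ x y z : U, brkt Rstar z (brkt Rstar x y) = 0) →
      ((∀ x y z : U,
          (3 : ℂ) • (x * Rstar y z) - (3 : ℂ) • (y * Rstar x z) +
            Rstar x (y * z) - Rstar y (x * z) = 0) ↔
        (∀ x y z t : U, H (x * y) (z * t) = 0))) := by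
  have hP : IsAPKPair H Rstar := ⟨⟨Hadd, Hsmul, Hherm⟩, Hnd, hadj, hapk⟩
  refine ⟨⟨fun hN => ⟨?_, ?_⟩, fun ⟨hcube, hann⟩ => ?_⟩, fun hN => ?_⟩
  · exact IsTwoStepNilpotent.mul_mul_eq_zero hN hP
  · exact fun w hw => IsTwoStepNilpotent.mul_eq_zero_of_forall_ann hN hP hw
  · exact isTwoStepNilpotent_of_mul_mul_eq_zero hP.hermitian Hnd hadj hcube hann
  · exact (IsTwoStepNilpotent.isFlat_iff hN hP).trans (hermitian_mul_mul_symm_iff hP.hermitian)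

/-- For an APK-compatible pair, `g_U` is 2-step nilpotent iff `U³ = 0` and
`(ann U)^⊥ ⊆ ann U`; in that case the pseudo-Kähler metric is flat iff
`U² ⊆ (U²)^⊥`. -/
theorem apk_two_step_nilpotent_iff
    {U : Type*} [NonUnitalCommRing U] [Module ℂ U]
    [SMulCommClass ℂ U U] [IsScalarTower ℂ U U] [FiniteDimensional ℂ U]
    (H : U → U → ℂ)
    (Hadd : ∀ x x' y : U, H (x + x') y = H x y + H x' y)
    (Hsmul : ∀ (c : ℂ) (x y : U), H (c • x) y = c * H x y)
    (Hherm : ∀ x y : U, H x y = starRingEnd ℂ (H y x))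
    (Hnd : ∀ x : U, (∀ y : U, H x y = 0) → x = 0)
    (Rstar : U → U → U)
    (hadj : ∀ z x y : U, H (Rstar z x) y = H x (z * y))
    (hapk : ∀ x y z : U, x * Rstar z y = y * Rstar z x) :
    ((∀ x y z : U, brkt Rstar z (brkt Rstar x y) = 0) ↔
      ((∀ x y z : U, x * y * z = 0) ∧
        (∀ w : U, (∀ a : U, (∀ v : U, a * v = 0) → H w a = 0) →
          ∀ v : U, w * v = 0))) ∧
    ((∀ x y z : U, brkt Rstar z (brkt Rstar x y) = 0) →
      ((∀ x y z : U,
          (3 : ℂ) • (x * Rstar y z) - (3 : ℂ) • (y * Rstar x z) +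
            Rstar x (y * z) - Rstar y (x * z) = 0) ↔
        (∀ x y z t : U, H (x * y) (z * t) = 0))) :=
  apk_two_step_nilpotent_iff_general H Hadd Hsmul Hherm Hnd Rstar hadj hapk
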